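/- The minimum positive semidefinite rank of the Clebsch graph is 8. -/

import Mathlib

/-- `M` has the off-diagonal zero pattern of `G`, i.e. `M ∈ S(G)` up to symmetry. -/
def matchesGraph {V : Type*} (G : SimpleGraph V) (M : Matrix V V ℝ) : Prop :=
  ∀ i j : V, i ≠ j → (M i j = 0 ↔ ¬ G.Adj i j)

/-- The Clebsch graph: vertices are 4-bit strings, adjacent iff they differ
in exactly one bit or in all four bits. -/
def clebsch : SimpleGraph (Fin 4 → Bool) :=
  SimpleGraph.fromRel (fun u v =>
    (Finset.univ.filter fun i => u i ≠ v i).card = 1 ∨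
    (Finset.univ.filter fun i => u i ≠ v i).card = 4)

/-- The minimum positive semidefinite rank of a graph. -/
noncomputable def mrPlus {V : Type*} [Fintype V] [DecidableEq V]
    (G : SimpleGraph V) : ℕ :=
  sInf {r | ∃ M : Matrix V V ℝ, matchesGraph G M ∧ M.PosSemidef ∧ M.rank = r}

/-!
Lower bound: if `M ∈ S(G)` is positive semidefinite and `M c = 0`, then the restriction of `c`
to a union `W` of components of the graph left after deleting vertices where `c` vanishes is
still in the kernel (its cross term with the rest of `c` is zero), so `c` vanishes at the only
neighbour in `W` of any vertex outside `W` (positive semidefinite zero forcing). In the Clebsch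
graph the 8 even-weight vertices force all others in one round, so `dim ker M ≤ 8`.

Upper bound: a signing `B` of the adjacency matrix with `B² = 5` gives positive semidefinite
matrices `√5 ± B` in `S(G)` whose product is `0`, so their ranks, each at least 8, sum to at
most 16.
-/

open Finset Matrix

theorem Matrix.card_sub_card_le_rank {K m n : Type*} [Field K] [Fintype m] [Fintype n]
    {M : Matrix m n K} (S : Finset n) (h : ∀ c, M *ᵥ c = 0 → (∀ x ∈ S, c x = 0) → c = 0) :
    Fintype.card n - #S ≤ M.rank := by
  let restrict : LinearMap.ker M.mulVecLin →ₗ[K] (S → K) :=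
    (LinearMap.funLeft K K ((↑) : S → n)).comp (LinearMap.ker M.mulVecLin).subtype
  have hinj : Function.Injective restrict := by
    rw [injective_iff_map_eq_zero]
    rintro ⟨c, hc⟩ hzero
    exact Subtype.ext <| h c (LinearMap.mem_ker.1 hc) fun x hx => congrFun hzero ⟨x, hx⟩
  have hker := LinearMap.finrank_le_finrank_of_injective hinj
  have hrn := LinearMap.finrank_range_add_finrank_ker M.mulVecLin
  rw [Module.finrank_fintype_fun_eq_card, Fintype.card_coe] at hker
  rw [Module.finrank_fintype_fun_eq_card] at hrn
  rw [Matrix.rank]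
  omega

section Forcing

variable {V : Type*} {G : SimpleGraph V} {M : Matrix V V ℝ}

theorem matchesGraph.apply_eq_zero (hG : matchesGraph G M) {i j : V} (hne : i ≠ j)
    (h : ¬G.Adj i j) : M i j = 0 :=
  (hG i j hne).2 h

theorem matchesGraph.apply_ne_zero (hG : matchesGraph G M) {i j : V} (h : G.Adj i j) :
    M i j ≠ 0 :=
  fun h0 => (hG i j h.ne).1 h0 h

theorem matchesGraph.neg (hG : matchesGraph G M) : matchesGraph G (-M) := fun i j hne => by
  rw [neg_apply, neg_eq_zero]
  exact hG i j hne

theorem matchesGraph.smul_one_add [DecidableEq V] (hG : matchesGraph G M) (s : ℝ) :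
    matchesGraph G (s • 1 + M) := fun i j hne => by
  rw [Matrix.add_apply, Matrix.smul_apply, one_apply_ne hne, smul_zero, zero_add]
  exact hG i j hne

/-- The positive semidefinite colour-change rule, relative to the set `B` of vertices where
kernel vectors are known to vanish: `u` forces `w` through `W`. In the usual formulation `u ∈ B`
and `W` is a component of `G - B`. -/
def IsPSDForce (G : SimpleGraph V) (B W : Finset V) (u w : V) : Prop :=
  (∀ x ∈ W, ∀ y ∉ W, G.Adj x y → y ∈ B) ∧ u ∉ W ∧ w ∈ W ∧ G.Adj u w ∧
    ∀ x ∈ W, G.Adj u x → x = w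

instance [Fintype V] [DecidableEq V] [DecidableRel G.Adj] {B W : Finset V} {u w : V} :
    Decidable (IsPSDForce G B W u w) := by
  unfold IsPSDForce
  infer_instance

variable [Fintype V]

theorem Matrix.PosSemidef.mulVec_indicator_eq_zero (hM : M.PosSemidef) (hG : matchesGraph G M)
    {c : V → ℝ} (hc : M *ᵥ c = 0) {W : Set V} (hW : ∀ x ∈ W, ∀ y ∉ W, G.Adj x y → c y = 0) :
    M *ᵥ W.indicator c = 0 := by
  classical
  have hout : ∀ x ∈ W, (M *ᵥ Wᶜ.indicator c) x = 0 := fun x hx =>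
    Finset.sum_eq_zero fun y _ => by
      by_cases hy : y ∈ W
      · rw [Set.indicator_of_notMem (Set.notMem_compl_iff.2 hy), mul_zero]
      by_cases hxy : G.Adj x y
      · rw [Set.indicator_of_mem hy, hW x hx y hy hxy, mul_zero]
      · exact mul_eq_zero_of_left (hG.apply_eq_zero (ne_of_mem_of_not_mem hx hy) hxy) _
  have hcross : W.indicator c ⬝ᵥ M *ᵥ Wᶜ.indicator c = 0 :=
    Finset.sum_eq_zero fun x _ => by
      by_cases hx : x ∈ W
      · rw [hout x hx, mul_zero]
      · rw [Set.indicator_of_notMem hx, zero_mul]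
  have hsplit : W.indicator c = c - Wᶜ.indicator c := by
    rw [eq_sub_iff_add_eq, Set.indicator_self_add_compl]
  rw [← hM.dotProduct_mulVec_zero_iff, star_trivial]
  nth_rw 2 [hsplit]
  rw [mulVec_sub, hc, dotProduct_sub, hcross, dotProduct_zero, sub_zero]

theorem IsPSDForce.apply_eq_zero {B W : Finset V} {u w : V} (hf : IsPSDForce G B W u w)
    (hM : M.PosSemidef) (hG : matchesGraph G M) {c : V → ℝ} (hc : M *ᵥ c = 0)
    (hB : ∀ b ∈ B, c b = 0) : c w = 0 := by
  obtain ⟨hW, hu, hw, huw, huniq⟩ := hf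
  have hrow := congrFun (hM.mulVec_indicator_eq_zero hG hc (W := W)
    fun x hx y hy hxy => hB y (hW x hx y hy hxy)) u
  rw [mulVec, dotProduct, Finset.sum_eq_single w, Set.indicator_of_mem (mem_coe.2 hw)] at hrow
  · exact (mul_eq_zero.1 hrow).resolve_left (hG.apply_ne_zero huw)
  · intro x _ hxw
    by_cases hx : x ∈ W
    · exact mul_eq_zero_of_left
        (hG.apply_eq_zero (ne_of_mem_of_not_mem hx hu).symm (mt (huniq x hx) hxw)) _
    · rw [Set.indicator_of_notMem (mt mem_coe.1 hx), mul_zero]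
  · exact fun h => (h (mem_univ w)).elim

theorem card_sub_card_le_rank_of_isPSDForce (hM : M.PosSemidef) (hG : matchesGraph G M)
    (B : Finset V) (hB : ∀ w ∉ B, ∃ W u, IsPSDForce G B W u w) :
    Fintype.card V - #B ≤ M.rank :=
  card_sub_card_le_rank B fun _ hc hcB => funext fun w => by
    by_cases hw : w ∈ B
    · exact hcB w hw
    · obtain ⟨_, _, hf⟩ := hB w hw
      exact hf.apply_eq_zero hM hG hc hcB

end Forcing

section SignedAdjacency

variable {V : Type*} [Fintype V] [DecidableEq V] {B : Matrix V V ℝ} {s : ℝ}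

theorem smul_one_add_mul_self (hB : B * B = s ^ 2 • 1) :
    (s • 1 + B) * (s • 1 + B) = (2 * s) • (s • 1 + B) := by
  rw [add_mul, mul_add, mul_add, hB]
  simp only [smul_mul_assoc, mul_smul_comm, one_mul, mul_one, smul_smul]
  module

theorem smul_one_add_mul_smul_one_add_neg (hB : B * B = s ^ 2 • 1) :
    (s • 1 + B) * (s • 1 + -B) = 0 := by
  rw [add_mul, mul_add, mul_add, mul_neg, mul_neg, hB]
  simp only [smul_mul_assoc, mul_smul_comm, one_mul, mul_one, smul_smul]
  module

theorem posSemidef_smul_one_add (hsymm : Bᴴ = B) (hB : B * B = s ^ 2 • 1) (hs : 0 < s) :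
    (s • 1 + B).PosSemidef := by
  have hA : (s • 1 + B)ᴴ = s • 1 + B := by
    rw [conjTranspose_add, conjTranspose_smul, conjTranspose_one, hsymm, star_trivial]
  have key : s • 1 + B = (2 * s)⁻¹ • ((s • 1 + B)ᴴ * (s • 1 + B)) := by
    rw [hA, smul_one_add_mul_self hB, inv_smul_smul₀ (by positivity)]
  rw [key]
  exact (posSemidef_conjTranspose_mul_self _).smul (by positivity)

end SignedAdjacency

instance : DecidableRel clebsch.Adj := fun u v =>
  decidable_of_iff' _ (SimpleGraph.fromRel_adj _ u v)

def clebschEvenVertices : Finset (Fin 4 → Bool) := {v | Even #{i | v i}}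

/-- An odd vertex and its antipode form a component of the odd vertices, and flipping bit `0` of
the odd vertex gives an even neighbour of it that is not adjacent to the antipode. -/
theorem clebsch_isPSDForce : ∀ v ∉ clebschEvenVertices,
    IsPSDForce clebsch clebschEvenVertices {v, fun i => !v i} (Function.update v 0 (!v 0)) v := by
  decide

theorem clebsch_eight_le_rank {M : Matrix (Fin 4 → Bool) (Fin 4 → Bool) ℝ} (hM : M.PosSemidef)
    (hG : matchesGraph clebsch M) : 8 ≤ M.rank := by
  have h := card_sub_card_le_rank_of_isPSDForce hM hG _ fun w hw =>
    ⟨_, _, clebsch_isPSDForce w hw⟩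
  rwa [show #clebschEvenVertices = 8 by decide, show Fintype.card (Fin 4 → Bool) = 16 by decide]
    at h

/-- Huang's signing of the 4-cube (flipping bit `i` of `u` has sign `(-1) ^ (u 0 + ⋯ + u (i-1))`),
extended to the antipodal edges by `(-1) ^ (u 0 + u 2)`. Every 4-cycle of the Clebsch graph then
has sign `-1`; as adjacent vertices have no common neighbour and non-adjacent ones have two, the
signed adjacency matrix squares to `5`. -/
def clebschSign (u v : Fin 4 → Bool) : ℤ :=
  if v = (fun j => !u j) then (-1) ^ ((u 0).toNat + (u 2).toNat)
  else ∑ i, if v = Function.update u i (!u i) then (-1) ^ #{j | j < i ∧ u j} else 0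

theorem clebschSign_comm : ∀ u v, clebschSign u v = clebschSign v u := by decide

theorem clebschSign_ne_zero_iff : ∀ u v, clebschSign u v ≠ 0 ↔ clebsch.Adj u v := by decide

theorem clebschSign_mul_self : Matrix.of clebschSign * Matrix.of clebschSign = 5 := by decide

noncomputable def clebschSignedAdj : Matrix (Fin 4 → Bool) (Fin 4 → Bool) ℝ :=
  (Matrix.of clebschSign).map (Int.castRingHom ℝ)

theorem clebschSignedAdj_conjTranspose : clebschSignedAdjᴴ = clebschSignedAdj := by
  ext u v
  simp [clebschSignedAdj, clebschSign_comm u v]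

theorem matchesGraph_clebschSignedAdj : matchesGraph clebsch clebschSignedAdj := fun u v _ => by
  simp [clebschSignedAdj, ← clebschSign_ne_zero_iff u v]

theorem clebschSignedAdj_mul_self : clebschSignedAdj * clebschSignedAdj = √5 ^ 2 • 1 := by
  rw [clebschSignedAdj, ← Matrix.map_mul, clebschSign_mul_self, Real.sq_sqrt (by norm_num)]
  ext u v
  simp [Matrix.ofNat_apply, Matrix.one_apply]

theorem exists_clebsch_posSemidef_rank_eight :
    ∃ M, matchesGraph clebsch M ∧ M.PosSemidef ∧ M.rank = 8 := by
  have hs : 0 < √5 := by positivity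
  have hsq := clebschSignedAdj_mul_self
  have hplus := posSemidef_smul_one_add clebschSignedAdj_conjTranspose hsq hs
  have hminus : (√5 • 1 + -clebschSignedAdj).PosSemidef :=
    posSemidef_smul_one_add (by rw [conjTranspose_neg, clebschSignedAdj_conjTranspose])
      (by rwa [neg_mul_neg]) hs
  have hG := matchesGraph_clebschSignedAdj
  have hsum := rank_add_rank_le_card_of_mul_eq_zero (smul_one_add_mul_smul_one_add_neg hsq)
  rw [show Fintype.card (Fin 4 → Bool) = 16 by decide] at hsum
  have hplus_ge := clebsch_eight_le_rank hplus (hG.smul_one_add _)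
  have hminus_ge := clebsch_eight_le_rank hminus (hG.neg.smul_one_add _)
  exact ⟨_, hG.smul_one_add _, hplus, by omega⟩

theorem clebsch_mrPlus_eq_eight : mrPlus clebsch = 8 :=
  IsLeast.csInf_eq ⟨exists_clebsch_posSemidef_rank_eight, by
    rintro _ ⟨M, hG, hM, rfl⟩
    exact clebsch_eight_le_rank hM hG⟩
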